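/- arXiv:math/0203012 — 3 statements merged into one kernel-verified Lean document; each statement's English description precedes it below -/
import Mathlib

section
/- For every looped digraph G = (V,A), Σ_{K acceptable for G} (λ+2)^{|V|−deg₄(K)} 2^{deg₄(K)} (−1)^{a(K)} = Σ_{K super for G} (λ+2)^{|V|−deg₄(K)} 2^{deg₄(K)} (−1)^{a(K)}; in other words, J(G)|_{x_e=1} equals the same sum restricted to super acceptable objects. -/
open Finset

/-! ### Permanents -/

/-- The permanent of a square matrix. -/
noncomputable def perm {ι R : Type*} [Fintype ι] [DecidableEq ι] [CommRing R]
    (M : Matrix ι ι R) : R :=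
  ∑ σ : Equiv.Perm ι, ∏ i, M i (σ i)

/-! ### Chord diagrams -/

/-- A chord diagram with `n` chords: a partition of `{1,…,2n}` into `n` two-element
subsets (chords), each recorded by its left endpoint `l i` and right endpoint `r i`,
with the chords numbered in increasing order of their left endpoints. -/
structure ChordDiagram (n : ℕ) where
  l : Fin n → Fin (2 * n)
  r : Fin n → Fin (2 * n)
  lr : ∀ i, l i < r i
  mono : StrictMono l
  cover : ∀ q : Fin (2 * n), ∃! i : Fin n, l i = q ∨ r i = q

namespace ChordDiagram

variable {n : ℕ}

/-- Chords `i` and `j` intersect. -/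
abbrev Intersect (D : ChordDiagram n) (i j : Fin n) : Prop :=
  (D.l i < D.l j ∧ D.l j < D.r i ∧ D.r i < D.r j) ∨
  (D.l j < D.l i ∧ D.l i < D.r j ∧ D.r j < D.r i)

/-- Chord `i` is completely contained in chord `j`. -/
abbrev Contained (D : ChordDiagram n) (i j : Fin n) : Prop :=
  D.l j < D.l i ∧ D.r i < D.r j

/-- The five colors `I, B⁺₀, B⁺₁, B⁻₀, B⁻₁` (`true` encodes subscript `1`). -/
inductive JCol where
  | I : JCol
  | Bp : Bool → JCol
  | Bm : Bool → JCol
  deriving DecidableEq, Fintype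

/-- The contribution `δ` of a left endpoint of a chord with a given color. -/
def lsign : JCol → ℤ
  | .Bp true => 1
  | .Bm true => -1
  | _ => 0

/-- `δ(q)` for a coloring `ρ` of the chords of `D`. -/
def delta (D : ChordDiagram n) (ρ : Fin n → JCol) (q : Fin (2 * n)) : ℤ :=
  ∑ v : Fin n, ((if D.l v = q then lsign (ρ v) else 0) +
                (if D.r v = q then - lsign (ρ v) else 0))

/-- `Σ_{q < p} δ(q)`. -/
def kOf (D : ChordDiagram n) (ρ : Fin n → JCol) (p : Fin (2 * n)) : ℤ :=
  ∑ q ∈ univ.filter (fun q => q < p), D.delta ρ q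

/-- The weight `ω_ρ(v)` of chord `v` under the coloring `ρ`. -/
noncomputable def omega (D : ChordDiagram n) (ρ : Fin n → JCol) (v : Fin n) :
    Polynomial ℚ :=
  match ρ v with
  | .I => Polynomial.X + 2
  | .Bp ε => - (-1 : Polynomial ℚ) ^ (if ε then 1 else 0) *
      (1 + ((D.kOf ρ (D.l v) : ℤ) : Polynomial ℚ)) *
      (Polynomial.X + 1 - ((D.kOf ρ (D.r v) : ℤ) : Polynomial ℚ))
  | .Bm ε => - (-1 : Polynomial ℚ) ^ (if ε then 1 else 0) *
      (1 + ((D.kOf ρ (D.r v) : ℤ) : Polynomial ℚ)) *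
      (Polynomial.X + 1 - ((D.kOf ρ (D.l v) : ℤ) : Polynomial ℚ))

/-- The colored Jones weight system `W_J(D) ∈ ℚ[λ]` (with `λ = X`). -/
noncomputable def WJ (D : ChordDiagram n) : Polynomial ℚ :=
  ∑ ρ : Fin n → JCol, ∏ v : Fin n, D.omega ρ v

/-- The intersection matrix `IM(D)` with entries `sign(i−j)` for intersecting chords. -/
def IM (D : ChordDiagram n) : Matrix (Fin n) (Fin n) ℚ := fun i j =>
  if D.Intersect i j then (if j < i then 1 else if i < j then -1 else 0) else 0

/-- The `3×3` block `A₀`. -/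
noncomputable def A0 : Matrix (Fin 3) (Fin 3) (Polynomial ℚ) :=
  !![Polynomial.X + 2, 0, 0; 0, Polynomial.X + 2, 1; Polynomial.X, -Polynomial.X - 2, 1]

/-- The `3×3` block `A₊`. -/
noncomputable def Aplus : Matrix (Fin 3) (Fin 3) (Polynomial ℚ) := !![1, 1, 0; 0, 0, 0; 0, 0, 0]

/-- The `3×3` block `A₋`. -/
noncomputable def Aminus : Matrix (Fin 3) (Fin 3) (Polynomial ℚ) := !![0, 0, 0; -1, -1, 0; 0, 0, 0]

/-- The `3×3` block `A_c`. -/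
noncomputable def Acont : Matrix (Fin 3) (Fin 3) (Polynomial ℚ) := !![1, 1, 0; -1, -1, 0; 0, 0, 0]

/-- The blown-up intersection matrix `IM_J(D)`, a `3n×3n` matrix of `3×3` blocks. -/
noncomputable def IMJ (D : ChordDiagram n) :
    Matrix (Fin n × Fin 3) (Fin n × Fin 3) (Polynomial ℚ) := fun p q =>
  (if p.1 = q.1 then A0
   else if q.1 < p.1 ∧ D.Intersect p.1 q.1 then Aplus
   else if p.1 < q.1 ∧ D.Intersect p.1 q.1 then Aminus
   else if ¬ D.Intersect p.1 q.1 ∧ D.Contained p.1 q.1 then Acont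
   else 0) p.2 q.2

end ChordDiagram

/-! ### Looped digraphs -/

/-- A looped digraph: a finite digraph (arcs a set of ordered pairs) with a loop at
every vertex and a distinguished set of red non-loop arcs. -/
structure LoopedDigraph (V : Type*) [Fintype V] [DecidableEq V] where
  arcs : Finset (V × V)
  red : Finset (V × V)
  loop_mem : ∀ v : V, (v, v) ∈ arcs
  red_sub : red ⊆ arcs
  red_no_loop : ∀ v : V, (v, v) ∉ red

/-- A thickened arc `(e, b)`, where `e` is an arc of the digraph and `b : Bool` records:
for an uncolored arc, whether it is thickened at its tail (`true`) or head (`false`);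
for a red arc (always thickened at its tail `e.1`), whether it keeps its original
orientation (`true`) or is reversed (`false`). Loops always carry `b = true`. -/
abbrev TArc (V : Type*) := (V × V) × Bool

variable {V : Type*} [Fintype V] [DecidableEq V]

/-- The degree of `v` in a collection `K` of thickened arcs: the number of arc-ends of
`K` at `v` (a loop contributing `2`). -/
def degAt (K : Finset (TArc V)) (v : V) : ℕ :=
  ∑ t ∈ K, ((if t.1.1 = v then 1 else 0) + (if t.1.2 = v then 1 else 0))

/-- `deg₄(K)`: the number of vertices of degree `4` in `K`. -/
def deg4 (K : Finset (TArc V)) : ℕ := (univ.filter fun v => degAt K v = 4).card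

namespace LoopedDigraph

variable (G : LoopedDigraph V)

/-- The initial vertex of a thickened arc, as oriented in the collection. -/
def src (t : TArc V) : V := if t.1 ∈ G.red ∧ t.2 = false then t.1.2 else t.1.1

/-- The terminal vertex of a thickened arc, as oriented in the collection. -/
def dst (t : TArc V) : V := if t.1 ∈ G.red ∧ t.2 = false then t.1.1 else t.1.2

/-- The vertex at which a thickened arc is thickened. -/
def tvert (t : TArc V) : V := if t.1 ∈ G.red then t.1.1 else if t.2 then t.1.1 else t.1.2

/-- The number of arcs of `K` thickened at `v`. -/
def thickAt (K : Finset (TArc V)) (v : V) : ℕ := (K.filter fun t => G.tvert t = v).card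

/-- The number of arcs of `K` thickened at `v` that leave `v` (a loop counting as
leaving). -/
def outThickAt (K : Finset (TArc V)) (v : V) : ℕ :=
  (K.filter fun t => G.tvert t = v ∧ G.src t = v).card

/-- An acceptable object for a looped digraph. -/
structure IsAcceptable (K : Finset (TArc V)) : Prop where
  mem_arcs : ∀ t ∈ K, t.1 ∈ G.arcs
  loop_thick : ∀ t ∈ K, t.1.1 = t.1.2 → t.2 = true
  deg024 : ∀ v, degAt K v = 0 ∨ degAt K v = 2 ∨ degAt K v = 4
  half_thick : ∀ v, 2 * G.thickAt K v = degAt K v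
  balance : ∀ v, G.thickAt K v = 2 → G.outThickAt K v = 1

/-- `a(K)`: the number of arcs of `K` thickened at their initial vertex (loops count). -/
def aK (K : Finset (TArc V)) : ℕ := (K.filter fun t => G.src t = G.tvert t).card

open Classical in
/-- The partition function `J(G)`, with `λ ↦ lam` and `x_e ↦ x e`. -/
noncomputable def J {R : Type*} [CommRing R] (lam : R) (x : V × V → R) : R :=
  ∑ K : Finset (TArc V),
    if G.IsAcceptable K then
      2 ^ deg4 K * (lam + 2) ^ (Fintype.card V - deg4 K) *
        (∏ t ∈ K, x t.1) * (-1 : R) ^ G.aK K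
    else 0

/-- `s(w) = δ_w · ε_w` for a partial coloring `c` (with support the set `V′`). -/
def sInt (c : V → Option (Bool × Bool)) (w : V) : ℤ :=
  match c w with
  | none => 0
  | some (δ, ε) => (if δ then 1 else -1) * (if ε then 1 else 0)

/-- `z_v(e)` (for `bar = false`) and `z̄_v(e)` (for `bar = true`). -/
def zfun {R : Type*} [CommRing R] (x : V × V → R) (c : V → Option (Bool × Bool))
    (bar : Bool) (v : V) (e : V × V) : R :=
  match c v with
  | none => 0
  | some (δ, _) =>
    if e ∈ G.red then
      (if e.1 = v then ((sInt c e.2 : ℤ) : R) * x e else 0)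
    else if e.1 = v then (if δ = bar then ((sInt c e.2 : ℤ) : R) * x e else 0)
    else if e.2 = v then (if δ ≠ bar then ((sInt c e.1 : ℤ) : R) * x e else 0)
    else 0

/-- The weight `ω′_c(v)`. -/
noncomputable def omegaC {R : Type*} [CommRing R] (lam : R) (x : V × V → R)
    (c : V → Option (Bool × Bool)) (v : V) : R :=
  match c v with
  | none => 0
  | some (_, ε) =>
    - (-1 : R) ^ (if ε then 1 else 0) *
      (1 + ∑ e ∈ G.arcs, G.zfun x c false v e) *
      (lam + 1 - ∑ e ∈ G.arcs, G.zfun x c true v e)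

/-- The state sum `J′(G)`: the sum over `V′ ⊆ V` and colorings `c` of `V′` is encoded
as a sum over partial colorings `c : V → Option (Bool × Bool)` with support `V′`. -/
noncomputable def J' {R : Type*} [CommRing R] (lam : R) (x : V × V → R) : R :=
  ∑ c : V → Option (Bool × Bool),
    (lam + 2) ^ (univ.filter fun v => c v = none).card *
      ∏ v ∈ univ.filter (fun v => (c v).isSome = true), G.omegaC lam x c v

end LoopedDigraph

/-! ### The labeled intersection digraph of a chord diagram -/

open ChordDiagram in
/-- The labeled intersection digraph `LID(D)` of a chord diagram `D`. -/
def LID {n : ℕ} (D : ChordDiagram n) : LoopedDigraph (Fin n) where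
  arcs := univ.filter fun p : Fin n × Fin n =>
    p.1 = p.2 ∨ (p.1 < p.2 ∧ D.Intersect p.1 p.2) ∨ D.Contained p.1 p.2
  red := univ.filter fun p : Fin n × Fin n => D.Contained p.1 p.2
  loop_mem := by intro v; simp
  red_sub := by intro p hp; simp only [mem_filter, mem_univ, true_and] at hp ⊢; tauto
  red_no_loop := by
    intro v hv
    simp only [mem_filter, mem_univ, true_and] at hv
    exact lt_irrefl _ hv.1

/-! ### The data `(V′, h)` and the state sum `A(V′, h)` -/

/-- The data of a function `h` assigning to every `v ∈ V′` a set of at most two arcs of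
`G` incident with `v`, every red arc of `h v` leaving `v` (and `h v = ∅` off `V′`). -/
structure HData (G : LoopedDigraph V) (V' : Finset V) where
  h : V → Finset (V × V)
  sub : ∀ v, h v ⊆ G.arcs
  card_le : ∀ v, (h v).card ≤ 2
  incident : ∀ v, ∀ e ∈ h v, e.1 = v ∨ e.2 = v
  red_out : ∀ v, ∀ e ∈ h v, e ∈ G.red → e.1 = v
  outside : ∀ v, v ∉ V' → h v = ∅

/-- The number of arc-ends at `v` among a set of thickened arcs `(e, w)`. -/
def endCountAt (S : Finset ((V × V) × V)) (v : V) : ℕ :=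
  ∑ p ∈ S, ((if p.1.1 = v then 1 else 0) + (if p.1.2 = v then 1 else 0))

namespace HData

variable {G : LoopedDigraph V} {V' : Finset V} (H : HData G V')

/-- `W₁ = {v ∈ V′ : |h(v)| = 2}`. -/
def W1 : Finset V := V'.filter fun v => (H.h v).card = 2

/-- `W₂ = {v ∈ V′ : |h(v)| ≥ 1}`. -/
def W2 : Finset V := V'.filter fun v => 1 ≤ (H.h v).card

/-- `h(W₂)`: the set of thickened arcs `(e, v)` with `v ∈ W₂` and `e ∈ h v`. -/
def hW2 : Finset ((V × V) × V) :=
  univ.filter fun p => p.2 ∈ H.W2 ∧ p.1 ∈ H.h p.2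

/-- The functions `g` on `S` with `g v ∈ h v`, encoded as singleton-valued selections
`gs : V → Finset (V × V)` (with `gs v = ∅` off `S`). -/
def choices (S : Finset V) : Finset (V → Finset (V × V)) :=
  univ.filter fun gs => ∀ v, gs v ⊆ H.h v ∧
    (v ∈ S → (gs v).card = 1) ∧ (v ∉ S → gs v = ∅)

/-- The summand `B(c, V₂′, g)`; here `g` is encoded by the selection `gs` on
`W₁ ∪ V₂′` and the complementary function `f` (on `W₁ ∪ V₁′`, `V₁′ = W₂∖(W₁∪V₂′)`)
is encoded by the complementary selection `h v ∖ gs v`. -/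
noncomputable def Bterm {R : Type*} [CommRing R] (lam : R) (x : V × V → R)
    (c : V → Option (Bool × Bool)) (V2 : Finset V) (gs : V → Finset (V × V)) : R :=
  (-1 : R) ^ (∑ v ∈ V', ((c v).elim 0 fun p => if p.2 then 1 else 0 : ℕ)) *
  (-1 : R) ^ (H.W1 ∪ V2).card *
  (lam + 1) ^ (V' \ (H.W1 ∪ V2)).card *
  (∏ v ∈ H.W1 ∪ V2, ∏ e ∈ gs v, G.zfun x c true v e) *
  (∏ v ∈ H.W1 ∪ (H.W2 \ (H.W1 ∪ V2)), ∏ e ∈ H.h v \ gs v, G.zfun x c false v e)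

open Classical in
/-- The state sum `A(V′, h)`. -/
noncomputable def Aval {R : Type*} [CommRing R] (lam : R) (x : V × V → R) : R :=
  ∑ c : V → Option (Bool × Bool),
    if (∀ v, (c v).isSome = true ↔ v ∈ V') then
      ∑ V2 ∈ (H.W2 \ H.W1).powerset, ∑ gs ∈ H.choices (H.W1 ∪ V2),
        H.Bterm lam x c V2 gs
    else 0

end HData

/-! ### Good collections and the state sum `C(X, V′, K)` -/

namespace LoopedDigraph

/-- A collection of thickened arcs good on `V′`. -/
structure IsGood (G : LoopedDigraph V) (V' : Finset V) (K : Finset (TArc V)) : Prop where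
  mem_arcs : ∀ t ∈ K, t.1 ∈ G.arcs
  loop_thick : ∀ t ∈ K, t.1.1 = t.1.2 → t.2 = true
  red_orig : ∀ t ∈ K, t.1 ∈ G.red → t.2 = true
  deg_mem : ∀ v ∈ V', degAt K v = 2 ∨ degAt K v = 4
  deg_out : ∀ v, v ∉ V' → degAt K v = 0
  half_thick : ∀ v, 2 * G.thickAt K v = degAt K v
  unc_opp : ∀ t ∈ K, ∀ s ∈ K, t ≠ s → t.1 ∉ G.red → s.1 ∉ G.red →
    G.tvert t = G.tvert s → ((G.src t = G.tvert t) ↔ ¬ (G.src s = G.tvert s))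

/-- The set `W₁` of degree-4 vertices of a collection `K`. -/
def KW1 (G : LoopedDigraph V) (K : Finset (TArc V)) : Finset V :=
  univ.filter fun v => degAt K v = 4

/-- The arcs of `K` thickened at `v`. -/
def thickedAt (G : LoopedDigraph V) (K : Finset (TArc V)) (v : V) : Finset (TArc V) :=
  K.filter fun t => G.tvert t = v

/-- The functions `g′` assigning to each degree-4 vertex one of the two arcs of `K`
thickened at it, encoded as singleton-valued selections. -/
def kchoices (G : LoopedDigraph V) (K : Finset (TArc V)) : Finset (V → Finset (TArc V)) :=
  univ.filter fun cs => ∀ v, cs v ⊆ G.thickedAt K v ∧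
    (v ∈ KW1 G K → (cs v).card = 1) ∧ (v ∉ KW1 G K → cs v = ∅)

open Classical in
/-- The state sum `C(X, V′, K)`. -/
noncomputable def Cval {R : Type*} [CommRing R] (G : LoopedDigraph V) (V' : Finset V)
    (K : Finset (TArc V)) (X : Finset V) (x : V × V → R) : R :=
  ∑ cs ∈ kchoices G K,
    (-1 : R) ^ (KW1 G K).card * (-1 : R) ^ X.card *
    ∑ c : V → Option (Bool × Bool),
      if (∀ v, (c v).isSome = true ↔ v ∈ V') then
        (∏ v ∈ KW1 G K ∪ X,
          ∏ t ∈ (if v ∈ KW1 G K then cs v else G.thickedAt K v), G.zfun x c true v t.1) *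
        (∏ v ∈ V' \ X, ∏ t ∈ G.thickedAt K v \ cs v, G.zfun x c false v t.1)
      else 0

/-- A connected acceptable object: one with no single loops. -/
def IsConnectedObj (G : LoopedDigraph V) (K : Finset (TArc V)) : Prop :=
  G.IsAcceptable K ∧ ∀ t ∈ K, t.1.1 = t.1.2 → degAt K t.1.1 ≠ 2

/-- A super acceptable object: connected, and every vertex has degree at least 2. -/
def IsSuper (G : LoopedDigraph V) (K : Finset (TArc V)) : Prop :=
  G.IsConnectedObj K ∧ ∀ v, 2 ≤ degAt K v

end LoopedDigraph

/-!
Toggling the loop at a vertex `v` of degree `0`, or at a vertex carrying a single loop,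
changes `a(K)` by one and preserves acceptability, `deg₄(K)` and the set of all such
"defects". An acceptable object is super exactly when it has no defect, so toggling the
loop at a defect chosen as a function of the defect set is a sign-reversing involution
on the acceptable objects that are not super, and their contributions cancel.
-/

open scoped symmDiff

section Loops

variable {V : Type*}

def loopArc (v : V) : TArc V := ((v, v), true)

lemma loopArc_injective : Function.Injective (loopArc : V → TArc V) :=
  fun _ _ h => congrArg (fun t : TArc V => t.1.1) h

variable [DecidableEq V] {K : Finset (TArc V)} {v : V}

lemma degAt_eq_zero_iff : degAt K v = 0 ↔ ∀ t ∈ K, t.1.1 ≠ v ∧ t.1.2 ≠ v := by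
  simp [degAt, sum_eq_zero_iff]

lemma loopArc_notMem_of_degAt_eq_zero (h : degAt K v = 0) : loopArc v ∉ K :=
  fun hv => (degAt_eq_zero_iff.1 h _ hv).1 rfl

lemma degAt_insert_loopArc (h : loopArc v ∉ K) (w : V) :
    degAt (insert (loopArc v) K) w = degAt K w + if w = v then 2 else 0 := by
  rw [degAt, sum_insert h, degAt, add_comm]
  rcases eq_or_ne w v with rfl | hw
  · simp [loopArc]
  · simp [loopArc, hw, hw.symm]

variable [Fintype V]

lemma deg4_insert_loopArc (hv : degAt K v = 0) : deg4 (insert (loopArc v) K) = deg4 K := by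
  unfold deg4
  congr 1
  refine filter_congr fun w _ => ?_
  rw [degAt_insert_loopArc (loopArc_notMem_of_degAt_eq_zero hv)]
  rcases eq_or_ne w v with rfl | hw <;> simp [*]

def defects (K : Finset (TArc V)) : Finset V :=
  univ.filter fun v => degAt K v = 0 ∨ (loopArc v ∈ K ∧ degAt K v = 2)

lemma defects_insert_loopArc (hv : degAt K v = 0) :
    defects (insert (loopArc v) K) = defects K := by
  ext w
  simp only [defects, mem_filter, mem_univ, true_and, mem_insert,
    degAt_insert_loopArc (loopArc_notMem_of_degAt_eq_zero hv), loopArc_injective.eq_iff]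
  rcases eq_or_ne w v with rfl | hw <;> simp [*]

lemma mem_defects_cases (hv : v ∈ defects K) :
    (degAt K v = 0 ∧ K ∆ {loopArc v} = insert (loopArc v) K) ∨
      ∃ K₀, degAt K₀ v = 0 ∧ K = insert (loopArc v) K₀ ∧ K ∆ {loopArc v} = K₀ := by
  simp only [defects, mem_filter, mem_univ, true_and] at hv
  by_cases h : loopArc v ∈ K
  · have hdeg : degAt K v = 2 :=
      (hv.resolve_left fun h0 => loopArc_notMem_of_degAt_eq_zero h0 h).2
    refine Or.inr ⟨K.erase (loopArc v), ?_, (insert_erase h).symm, ?_⟩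
    · have := degAt_insert_loopArc (notMem_erase (loopArc v) K) v
      rw [insert_erase h, hdeg] at this
      simpa using this
    · rw [symmDiff_of_ge (singleton_subset_iff.2 h), sdiff_singleton_eq_erase]
  · refine Or.inl ⟨hv.resolve_right fun h2 => h h2.1, ?_⟩
    rw [symmDiff_eq_union (disjoint_singleton_right.2 h), union_comm, insert_eq]

lemma deg4_symmDiff_loopArc (hv : v ∈ defects K) : deg4 (K ∆ {loopArc v}) = deg4 K := by
  obtain ⟨h0, h⟩ | ⟨K₀, h0, rfl, h⟩ := mem_defects_cases hv <;>
    rw [h, deg4_insert_loopArc h0]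

lemma defects_symmDiff_loopArc (hv : v ∈ defects K) :
    defects (K ∆ {loopArc v}) = defects K := by
  obtain ⟨h0, h⟩ | ⟨K₀, h0, rfl, h⟩ := mem_defects_cases hv <;>
    rw [h, defects_insert_loopArc h0]

end Loops

namespace LoopedDigraph

variable {V : Type*} [Fintype V] [DecidableEq V] (G : LoopedDigraph V)
  {K : Finset (TArc V)} {v : V}

lemma tvert_loopArc (v : V) : G.tvert (loopArc v) = v := by
  simp [tvert, loopArc, G.red_no_loop v]

lemma src_loopArc (v : V) : G.src (loopArc v) = v := by
  simp [src, loopArc]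

lemma tvert_eq_or (t : TArc V) : G.tvert t = t.1.1 ∨ G.tvert t = t.1.2 := by
  unfold tvert
  split_ifs <;> simp

lemma thickAt_eq_zero_of_degAt_eq_zero (h : degAt K v = 0) : G.thickAt K v = 0 := by
  refine card_eq_zero.2 (filter_eq_empty_iff.2 fun t ht htv => ?_)
  have := degAt_eq_zero_iff.1 h t ht
  rcases G.tvert_eq_or t with h' | h' <;> simp_all

lemma thickAt_insert_loopArc (h : loopArc v ∉ K) (w : V) :
    G.thickAt (insert (loopArc v) K) w = G.thickAt K w + if w = v then 1 else 0 := by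
  rw [thickAt, filter_insert, tvert_loopArc]
  rcases eq_or_ne w v with rfl | hw
  · simp [card_insert_of_notMem (fun h' => h (mem_filter.1 h').1), thickAt]
  · simp [hw.symm, hw, thickAt]

lemma outThickAt_insert_loopArc (h : loopArc v ∉ K) (w : V) :
    G.outThickAt (insert (loopArc v) K) w = G.outThickAt K w + if w = v then 1 else 0 := by
  rw [outThickAt, filter_insert, tvert_loopArc, src_loopArc]
  rcases eq_or_ne w v with rfl | hw
  · simp [card_insert_of_notMem (fun h' => h (mem_filter.1 h').1), outThickAt]
  · simp [hw.symm, hw, outThickAt]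

lemma aK_insert_loopArc (h : loopArc v ∉ K) : G.aK (insert (loopArc v) K) = G.aK K + 1 := by
  rw [aK, filter_insert, if_pos (by rw [tvert_loopArc, src_loopArc]),
    card_insert_of_notMem (fun h' => h (mem_filter.1 h').1), aK]

lemma isAcceptable_insert_loopArc_iff (hv : degAt K v = 0) :
    G.IsAcceptable (insert (loopArc v) K) ↔ G.IsAcceptable K := by
  have hℓ := loopArc_notMem_of_degAt_eq_zero hv
  have hthick := G.thickAt_eq_zero_of_degAt_eq_zero hv
  have hdeg := degAt_insert_loopArc hℓ
  have hthick' := G.thickAt_insert_loopArc hℓ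
  have hout := G.outThickAt_insert_loopArc hℓ
  constructor
  · intro hA
    refine ⟨fun t ht => hA.mem_arcs t (mem_insert_of_mem ht),
      fun t ht => hA.loop_thick t (mem_insert_of_mem ht),
      fun w => ?_, fun w => ?_, fun w => ?_⟩ <;>
      rcases eq_or_ne w v with rfl | hw
    · simp [hv]
    · simpa [hdeg, hw] using hA.deg024 w
    · simp [hv, hthick]
    · simpa [hdeg, hthick', hw] using hA.half_thick w
    · simp [hthick]
    · simpa [hthick', hout, hw] using hA.balance w
  · intro hA
    refine ⟨fun t ht => ?_, fun t ht => ?_, fun w => ?_, fun w => ?_, fun w => ?_⟩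
    · obtain rfl | ht := mem_insert.1 ht
      exacts [G.loop_mem v, hA.mem_arcs t ht]
    · obtain rfl | ht := mem_insert.1 ht
      exacts [fun _ => rfl, hA.loop_thick t ht]
    all_goals rcases eq_or_ne w v with rfl | hw
    · simp [hdeg, hv]
    · simpa [hdeg, hw] using hA.deg024 w
    · simp [hdeg, hthick', hv, hthick]
    · simpa [hdeg, hthick', hw] using hA.half_thick w
    · simp [hthick', hthick]
    · simpa [hthick', hout, hw] using hA.balance w

lemma isAcceptable_symmDiff_loopArc_iff (hv : v ∈ defects K) :
    G.IsAcceptable (K ∆ {loopArc v}) ↔ G.IsAcceptable K := by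
  obtain ⟨h0, h⟩ | ⟨K₀, h0, rfl, h⟩ := mem_defects_cases hv <;>
    rw [h, G.isAcceptable_insert_loopArc_iff h0]

lemma neg_one_pow_aK_symmDiff_loopArc {R : Type*} [Monoid R] [HasDistribNeg R]
    (hv : v ∈ defects K) : (-1 : R) ^ G.aK (K ∆ {loopArc v}) = -(-1) ^ G.aK K := by
  obtain ⟨h0, h⟩ | ⟨K₀, h0, rfl, h⟩ := mem_defects_cases hv <;>
    rw [h, G.aK_insert_loopArc (loopArc_notMem_of_degAt_eq_zero h0), pow_succ, mul_neg_one]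
  rw [neg_neg]

lemma isSuper_iff_defects_eq_empty (hK : G.IsAcceptable K) :
    G.IsSuper K ↔ defects K = ∅ := by
  simp only [IsSuper, IsConnectedObj, hK, true_and, defects, filter_eq_empty_iff, mem_univ,
    true_implies, not_or, not_and]
  constructor
  · rintro ⟨hloop, hdeg⟩ v
    exact ⟨by have := hdeg v; omega, fun hℓ => hloop _ hℓ rfl⟩
  · intro h
    refine ⟨fun ⟨⟨a, b⟩, c⟩ ht hab => ?_, fun v => ?_⟩
    · obtain rfl : a = b := hab
      obtain rfl : c = true := hK.loop_thick _ ht rfl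
      exact (@h a).2 ht
    · have := hK.deg024 v
      have := (@h v).1
      omega

open Classical in
lemma sum_acceptable_of_defects_nonempty_eq_zero {R : Type*} [Ring R] (f : ℕ → R) :
    ∑ K ∈ univ.filter (fun K => G.IsAcceptable K ∧ (defects K).Nonempty),
      f (deg4 K) * (-1) ^ G.aK K = 0 := by
  choose pick hpick using fun (D : Finset V) (hD : D.Nonempty) => hD
  refine sum_involution
    (fun K hK => K ∆ {loopArc (pick (defects K) (mem_filter.1 hK).2.2)}) ?_ ?_ ?_ ?_
  · intro K hK
    rw [deg4_symmDiff_loopArc (hpick _ _), G.neg_one_pow_aK_symmDiff_loopArc (hpick _ _),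
      mul_neg, add_neg_cancel]
  · intro K _ _ h
    exact singleton_ne_empty _ (symmDiff_eq_left.1 h)
  · intro K hK
    obtain ⟨hA, hD⟩ := (mem_filter.1 hK).2
    simp only [mem_filter, mem_univ, true_and]
    rw [G.isAcceptable_symmDiff_loopArc_iff (hpick _ _), defects_symmDiff_loopArc (hpick _ _)]
    exact ⟨hA, hD⟩
  · intro K hK
    simp only [defects_symmDiff_loopArc (hpick _ _), symmDiff_symmDiff_cancel_right]

open Classical in
theorem sum_acceptable_eq_sum_super {R : Type*} [Ring R] (f : ℕ → R) :
    (∑ K : Finset (TArc V), if G.IsAcceptable K then f (deg4 K) * (-1) ^ G.aK K else 0) =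
      ∑ K : Finset (TArc V), if G.IsSuper K then f (deg4 K) * (-1) ^ G.aK K else 0 := by
  rw [← sum_filter, ← sum_filter,
    ← sum_filter_add_sum_filter_not _ (fun K => (defects K).Nonempty), filter_filter,
    G.sum_acceptable_of_defects_nonempty_eq_zero, zero_add, filter_filter]
  refine sum_congr (filter_congr fun K _ => ?_) fun _ _ => rfl
  rw [not_nonempty_iff_eq_empty]
  exact ⟨fun h => (G.isSuper_iff_defects_eq_empty h.1).2 h.2,
    fun h => ⟨h.1.1, (G.isSuper_iff_defects_eq_empty h.1.1).1 h⟩⟩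

end LoopedDigraph

open Classical in
/-- The sum defining `J(G)|_{x_e=1}` over acceptable objects equals the same sum
restricted to super acceptable objects. -/
theorem acceptable_sum_eq_super_sum {V : Type*} [Fintype V] [DecidableEq V]
    (G : LoopedDigraph V) :
    (∑ K : Finset (TArc V),
      if G.IsAcceptable K then
        (Polynomial.X + 2 : Polynomial ℚ) ^ (Fintype.card V - deg4 K) *
          2 ^ deg4 K * (-1 : Polynomial ℚ) ^ G.aK K
      else 0) =
    (∑ K : Finset (TArc V),
      if G.IsSuper K then
        (Polynomial.X + 2 : Polynomial ℚ) ^ (Fintype.card V - deg4 K) *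
          2 ^ deg4 K * (-1 : Polynomial ℚ) ^ G.aK K
      else 0) :=
  G.sum_acceptable_eq_sum_super fun d => (Polynomial.X + 2) ^ (Fintype.card V - d) * 2 ^ d
end

section
/- For every chord diagram D with n chords, Per(IM(D)) = Σ_K (−1)^{a(K)}, where the sum is over all acceptable objects K for LID(D) that contain only uncolored arcs, contain no loops, and in which every vertex has degree exactly 2. -/
open Finset

variable {V : Type*} [Fintype V] [DecidableEq V]

/-! ### Auxiliary material for the proof -/

section AuxProof

open ChordDiagram LoopedDigraph

variable {n : ℕ}

/-- The thickened arc associated to the ordered pair `(i, j)`. -/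
private def toA (i j : Fin n) : TArc (Fin n) :=
  if i < j then ((i, j), true) else ((j, i), false)

variable (D : ChordDiagram n)

private lemma inter_symm {i j : Fin n} (h : D.Intersect i j) : D.Intersect j i :=
  h.symm

private lemma inter_ne {i j : Fin n} (h : D.Intersect i j) : i ≠ j := by
  rintro rfl
  rcases h with ⟨h1, _, _⟩ | ⟨h1, _, _⟩ <;> exact lt_irrefl _ h1

private lemma inter_not_cont {i j : Fin n} (h : D.Intersect i j) : ¬ D.Contained i j := by
  rintro ⟨h1, h2⟩
  rcases h with ⟨a, b, c⟩ | ⟨a, b, c⟩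
  · exact absurd h1 (lt_asymm a)
  · exact absurd h2 (lt_asymm c)

private lemma mem_red_iff {p : Fin n × Fin n} :
    p ∈ (LID D).red ↔ D.Contained p.1 p.2 := by
  simp [LID]

private lemma mem_arcs_iff {p : Fin n × Fin n} :
    p ∈ (LID D).arcs ↔
      (p.1 = p.2 ∨ (p.1 < p.2 ∧ D.Intersect p.1 p.2) ∨ D.Contained p.1 p.2) := by
  simp [LID]

private lemma toA_not_red {i j : Fin n} (h : D.Intersect i j) :
    (toA i j).1 ∉ (LID D).red := by
  unfold toA
  split
  · rw [mem_red_iff]; exact inter_not_cont D h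
  · rw [mem_red_iff]; exact inter_not_cont D (inter_symm D h)

private lemma toA_mem_arcs {i j : Fin n} (h : D.Intersect i j) :
    (toA i j).1 ∈ (LID D).arcs := by
  have hne := inter_ne D h
  by_cases hlt : i < j
  · rw [toA, if_pos hlt, mem_arcs_iff]; exact Or.inr (Or.inl ⟨hlt, h⟩)
  · rw [toA, if_neg hlt, mem_arcs_iff]
    exact Or.inr (Or.inl ⟨lt_of_le_of_ne (not_lt.mp hlt) (Ne.symm hne), inter_symm D h⟩)

private lemma toA_ne_loop {i j : Fin n} (h : i ≠ j) :
    (toA i j).1.1 ≠ (toA i j).1.2 := by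
  unfold toA
  split
  · exact h
  · exact h.symm

private lemma tvert_toA {i j : Fin n} (h : D.Intersect i j) :
    (LID D).tvert (toA i j) = i := by
  have hnr := toA_not_red D h
  have hne := inter_ne D h
  unfold LoopedDigraph.tvert
  rw [if_neg hnr]
  unfold toA at hnr ⊢
  split
  · simp
  · simp

private lemma src_toA {i j : Fin n} (h : D.Intersect i j) :
    (LID D).src (toA i j) = (toA i j).1.1 := by
  have hnr := toA_not_red D h
  unfold LoopedDigraph.src
  rw [if_neg (by tauto)]

private lemma src_eq_tvert_toA_iff {i j : Fin n} (h : D.Intersect i j) :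
    ((LID D).src (toA i j) = (LID D).tvert (toA i j)) ↔ i < j := by
  rw [src_toA D h, tvert_toA D h]
  have hne := inter_ne D h
  by_cases hlt : i < j
  · rw [toA, if_pos hlt]; simpa using hlt
  · rw [toA, if_neg hlt]
    simp only []
    constructor
    · intro hji; exact absurd hji.symm hne
    · intro hij; exact absurd hij hlt

private lemma toA_other {i j : Fin n} (h : i ≠ j) :
    (if (toA i j).2 then (toA i j).1.2 else (toA i j).1.1) = j := by
  unfold toA
  split <;> simp

private lemma toA_end_count (i j v : Fin n) :
    ((if (toA i j).1.1 = v then 1 else 0) + (if (toA i j).1.2 = v then 1 else 0) : ℕ)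
      = (if i = v then 1 else 0) + (if j = v then 1 else 0) := by
  unfold toA
  split
  · rfl
  · simp [add_comm]

/-- The forward map: a permutation gives a collection of thickened arcs. -/
private def Fmap (σ : Equiv.Perm (Fin n)) : Finset (TArc (Fin n)) :=
  Finset.image (fun i => toA i (σ i)) Finset.univ

private lemma Fmap_mapinj {σ : Equiv.Perm (Fin n)}
    (hσ : ∀ i, D.Intersect i (σ i)) :
    Function.Injective (fun i : Fin n => toA i (σ i)) := by
  intro a b hab
  have := congrArg (LID D).tvert hab
  rwa [tvert_toA D (hσ a), tvert_toA D (hσ b)] at this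

private lemma mem_Fmap {σ : Equiv.Perm (Fin n)} {t : TArc (Fin n)} :
    t ∈ Fmap σ ↔ ∃ i, toA i (σ i) = t := by
  simp [Fmap]

private lemma degAt_Fmap {σ : Equiv.Perm (Fin n)}
    (hσ : ∀ i, D.Intersect i (σ i)) (v : Fin n) : degAt (Fmap σ) v = 2 := by
  unfold degAt Fmap
  rw [Finset.sum_image (fun a _ b _ h => Fmap_mapinj D hσ h)]
  have hrw : ∀ i : Fin n,
      ((if (toA i (σ i)).1.1 = v then 1 else 0)
        + (if (toA i (σ i)).1.2 = v then 1 else 0) : ℕ)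
      = (if i = v then 1 else 0) + (if σ i = v then 1 else 0) :=
    fun i => toA_end_count i (σ i) v
  rw [Finset.sum_congr rfl (fun i _ => hrw i), Finset.sum_add_distrib]
  have h1 : (∑ i : Fin n, if i = v then (1 : ℕ) else 0) = 1 := by
    rw [Finset.sum_ite_eq' Finset.univ v (fun _ => (1 : ℕ))]
    simp
  have h2 : (∑ i : Fin n, if σ i = v then (1 : ℕ) else 0) = 1 := by
    rw [Equiv.sum_comp σ (fun j => if j = v then (1 : ℕ) else 0)]
    rw [Finset.sum_ite_eq' Finset.univ v (fun _ => (1 : ℕ))]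
    simp
  rw [h1, h2]

private lemma thickAt_Fmap {σ : Equiv.Perm (Fin n)}
    (hσ : ∀ i, D.Intersect i (σ i)) (v : Fin n) :
    (LID D).thickAt (Fmap σ) v = 1 := by
  unfold LoopedDigraph.thickAt Fmap
  rw [Finset.filter_image]
  have : (Finset.filter (fun a => (LID D).tvert (toA a (σ a)) = v) Finset.univ)
      = {v} := by
    ext a
    simp only [Finset.mem_filter, Finset.mem_univ, true_and, Finset.mem_singleton]
    rw [tvert_toA D (hσ a)]
  rw [this]
  simp

private lemma aK_Fmap {σ : Equiv.Perm (Fin n)}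
    (hσ : ∀ i, D.Intersect i (σ i)) :
    (LID D).aK (Fmap σ)
      = (Finset.filter (fun i : Fin n => i < σ i) Finset.univ).card := by
  unfold LoopedDigraph.aK Fmap
  rw [Finset.filter_image]
  rw [Finset.card_image_of_injective _ (Fmap_mapinj D hσ)]
  congr 1
  apply Finset.filter_congr
  intro i _
  exact src_eq_tvert_toA_iff D (hσ i)

private lemma Fmap_good {σ : Equiv.Perm (Fin n)}
    (hσ : ∀ i, D.Intersect i (σ i)) :
    (LID D).IsAcceptable (Fmap σ) ∧ (∀ t ∈ Fmap σ, t.1 ∉ (LID D).red) ∧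
      (∀ t ∈ Fmap σ, t.1.1 ≠ t.1.2) ∧ (∀ v, degAt (Fmap σ) v = 2) := by
  have hdeg := degAt_Fmap D hσ
  have hthick := thickAt_Fmap D hσ
  refine ⟨⟨?_, ?_, ?_, ?_, ?_⟩, ?_, ?_, hdeg⟩
  · rintro t ht
    obtain ⟨i, rfl⟩ := mem_Fmap.mp ht
    exact toA_mem_arcs D (hσ i)
  · rintro t ht hloop
    obtain ⟨i, rfl⟩ := mem_Fmap.mp ht
    exact absurd hloop (toA_ne_loop (inter_ne D (hσ i)))
  · intro v; right; left; exact hdeg v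
  · intro v; rw [hthick v, hdeg v]
  · intro v hv; rw [hthick v] at hv; omega
  · rintro t ht
    obtain ⟨i, rfl⟩ := mem_Fmap.mp ht
    exact toA_not_red D (hσ i)
  · rintro t ht
    obtain ⟨i, rfl⟩ := mem_Fmap.mp ht
    exact toA_ne_loop (inter_ne D (hσ i))

private lemma IM_val {i j : Fin n} (h : D.Intersect i j) :
    D.IM i j = (-1 : ℚ) ^ (if i < j then 1 else 0) := by
  unfold ChordDiagram.IM
  rw [if_pos h]
  rcases lt_trichotomy i j with hlt | heq | hgt
  · rw [if_neg (lt_asymm hlt), if_pos hlt, if_pos hlt]; norm_num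
  · exact absurd heq (inter_ne D h)
  · rw [if_pos hgt, if_neg (lt_asymm hgt)]; norm_num

end AuxProof

open Classical in
/-- For every chord diagram `D`, `Per(IM(D)) = Σ_K (−1)^{a(K)}`, summed over the
acceptable objects for `LID(D)` with only uncolored arcs, no loops, and all degrees
exactly `2`. -/
theorem perm_IM_eq_acceptable_sum {n : ℕ} (D : ChordDiagram n) :
    perm (ChordDiagram.IM D) =
      ∑ K : Finset (TArc (Fin n)),
        if (LID D).IsAcceptable K ∧ (∀ t ∈ K, t.1 ∉ (LID D).red) ∧
            (∀ t ∈ K, t.1.1 ≠ t.1.2) ∧ (∀ v, degAt K v = 2)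
        then ((-1 : ℚ) ^ ((LID D).aK K)) else 0 := by
  classical
  unfold perm
  have hL : (∑ σ : Equiv.Perm (Fin n), ∏ i, D.IM i (σ i))
      = ∑ σ ∈ Finset.univ.filter
          (fun σ : Equiv.Perm (Fin n) => ∀ i, D.Intersect i (σ i)),
          ∏ i, D.IM i (σ i) := by
    symm
    apply Finset.sum_filter_of_ne
    intro σ _ hne i
    by_contra hni
    exact hne (Finset.prod_eq_zero (Finset.mem_univ i)
      (by simp [ChordDiagram.IM, hni]))
  have hR : (∑ K : Finset (TArc (Fin n)),
        if (LID D).IsAcceptable K ∧ (∀ t ∈ K, t.1 ∉ (LID D).red) ∧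
            (∀ t ∈ K, t.1.1 ≠ t.1.2) ∧ (∀ v, degAt K v = 2)
        then ((-1 : ℚ) ^ ((LID D).aK K)) else 0)
      = ∑ K ∈ Finset.univ.filter (fun K : Finset (TArc (Fin n)) =>
            (LID D).IsAcceptable K ∧ (∀ t ∈ K, t.1 ∉ (LID D).red) ∧
            (∀ t ∈ K, t.1.1 ≠ t.1.2) ∧ (∀ v, degAt K v = 2)),
          ((-1 : ℚ) ^ ((LID D).aK K)) := by
    rw [Finset.sum_filter]
  rw [hL, hR]
  apply Finset.sum_bij (fun σ _ => Fmap σ)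
  · -- maps into the target set
    intro σ hσ
    simp only [Finset.mem_filter, Finset.mem_univ, true_and] at hσ ⊢
    exact Fmap_good D hσ
  · -- injectivity
    intro σ₁ h₁ σ₂ h₂ h12
    simp only [Finset.mem_filter, Finset.mem_univ, true_and] at h₁ h₂
    ext i
    have hmem : toA i (σ₁ i) ∈ Fmap σ₂ := h12 ▸ mem_Fmap.mpr ⟨i, rfl⟩
    obtain ⟨j, hj⟩ := mem_Fmap.mp hmem
    have hji : j = i := by
      have := congrArg (LID D).tvert hj
      rwa [tvert_toA D (h₂ j), tvert_toA D (h₁ i)] at this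
    subst hji
    have hoth := congrArg (fun t : TArc (Fin n) =>
      if t.2 then t.1.2 else t.1.1) hj
    rw [toA_other (inter_ne D (h₂ j)), toA_other (inter_ne D (h₁ j))] at hoth
    exact congrArg Fin.val hoth.symm
  · -- surjectivity
    intro K hK
    simp only [Finset.mem_filter, Finset.mem_univ, true_and] at hK
    obtain ⟨hacc, hnored, hnoloop, hdeg⟩ := hK
    have hth : ∀ v, ((LID D).thickAt K v) = 1 := by
      intro v
      have h1 := hacc.half_thick v
      rw [hdeg v] at h1
      omega
    have hcard1 : ∀ v : Fin n,
        ∃ t, K.filter (fun t => (LID D).tvert t = v) = {t} :=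
      fun v => Finset.card_eq_one.mp (hth v)
    choose tv htv using hcard1
    have htvK : ∀ v, tv v ∈ K := by
      intro v
      have hm : tv v ∈ K.filter (fun t => (LID D).tvert t = v) := by
        rw [htv v]; exact Finset.mem_singleton_self _
      exact (Finset.mem_filter.mp hm).1
    have htvt : ∀ v, (LID D).tvert (tv v) = v := by
      intro v
      have hm : tv v ∈ K.filter (fun t => (LID D).tvert t = v) := by
        rw [htv v]; exact Finset.mem_singleton_self _
      exact (Finset.mem_filter.mp hm).2
    have hstruct : ∀ t ∈ K, t.1.1 < t.1.2 ∧ D.Intersect t.1.1 t.1.2 := by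
      intro t ht
      have h1 := hacc.mem_arcs t ht
      rw [mem_arcs_iff] at h1
      rcases h1 with h | h | h
      · exact absurd h (hnoloop t ht)
      · exact h
      · exact absurd ((mem_red_iff D).mpr h) (hnored t ht)
    have htvert : ∀ t ∈ K,
        (LID D).tvert t = (if t.2 then t.1.1 else t.1.2) := by
      intro t ht
      unfold LoopedDigraph.tvert
      rw [if_neg (hnored t ht)]
    set f : Fin n → Fin n :=
      fun v => if (tv v).2 then (tv v).1.2 else (tv v).1.1 with hf
    have hkey : ∀ v, toA v (f v) = tv v := by
      intro v
      have hs := hstruct (tv v) (htvK v)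
      have htvv := htvt v
      rw [htvert (tv v) (htvK v)] at htvv
      by_cases hb : (tv v).2
      · rw [if_pos hb] at htvv
        have hfv : f v = (tv v).1.2 := by simp only [hf, if_pos hb]
        have hv2 : v < (tv v).1.2 := htvv.symm.trans_lt hs.1
        have hlt : v < f v := by rw [hfv]; exact hv2
        rw [toA, if_pos hlt]
        exact Prod.ext_iff.mpr ⟨Prod.ext_iff.mpr ⟨htvv.symm, hfv⟩, hb.symm⟩
      · rw [if_neg hb] at htvv
        rw [Bool.not_eq_true] at hb
        have hfv : f v = (tv v).1.1 := by simp only [hf, hb]; rfl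
        have hv2 : f v < v := by rw [hfv]; exact lt_of_lt_of_eq hs.1 htvv
        have hlt : ¬ v < f v := not_lt.mpr hv2.le
        rw [toA, if_neg hlt]
        exact Prod.ext_iff.mpr ⟨Prod.ext_iff.mpr ⟨hfv, htvv.symm⟩, hb.symm⟩
    have hinter : ∀ v, D.Intersect v (f v) := by
      intro v
      have hs := hstruct (tv v) (htvK v)
      rw [← hkey v] at hs
      by_cases hlt : v < f v
      · rw [toA, if_pos hlt] at hs; exact hs.2
      · rw [toA, if_neg hlt] at hs; exact inter_symm D hs.2
    have hend : ∀ (t : TArc (Fin n)) (u : Fin n), t.1.1 = u ∨ t.1.2 = u →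
        1 ≤ ((if t.1.1 = u then 1 else 0) + (if t.1.2 = u then 1 else 0) : ℕ) := by
      intro t u h
      rcases h with h | h
      · rw [if_pos h]; omega
      · rw [if_pos h]; omega
    have hinj : Function.Injective f := by
      intro v w hvw
      by_contra hnevw
      have huv : f v ≠ v := (inter_ne D (hinter v)).symm
      have huw : f v ≠ w := by
        rw [hvw]; exact (inter_ne D (hinter w)).symm
      have h1 : (tv v).1.1 = f v ∨ (tv v).1.2 = f v := by
        rw [← hkey v]
        by_cases hlt : v < f v
        · rw [toA, if_pos hlt]; right; rfl
        · rw [toA, if_neg hlt]; left; rfl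
      have h2 : (tv w).1.1 = f v ∨ (tv w).1.2 = f v := by
        rw [hvw, ← hkey w]
        by_cases hlt : w < f w
        · rw [toA, if_pos hlt]; right; rfl
        · rw [toA, if_neg hlt]; left; rfl
      have h3 : (tv (f v)).1.1 = f v ∨ (tv (f v)).1.2 = f v := by
        have h4 := htvt (f v)
        rw [htvert (tv (f v)) (htvK (f v))] at h4
        by_cases hb : (tv (f v)).2
        · rw [if_pos hb] at h4; left; exact h4
        · rw [if_neg hb] at h4; right; exact h4
      have tvinj : ∀ a b : Fin n, tv a = tv b → a = b := by
        intro a b h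
        rw [← htvt a, h]
        exact htvt b
      have hd1 : tv v ≠ tv w := fun h => hnevw (tvinj v w h)
      have hd2 : tv v ≠ tv (f v) := fun h => huv (tvinj v (f v) h).symm
      have hd3 : tv w ≠ tv (f v) := fun h => huw (tvinj w (f v) h).symm
      have hsub : ({tv v, tv w, tv (f v)} : Finset (TArc (Fin n))) ⊆ K := by
        intro t ht
        simp only [Finset.mem_insert, Finset.mem_singleton] at ht
        rcases ht with rfl | rfl | rfl <;> exact htvK _
      have hsum3 : 3 ≤ ∑ t ∈ ({tv v, tv w, tv (f v)} : Finset (TArc (Fin n))),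
          ((if t.1.1 = f v then 1 else 0) + (if t.1.2 = f v then 1 else 0) : ℕ) := by
        rw [Finset.sum_insert (by
            simp only [Finset.mem_insert, Finset.mem_singleton]
            push_neg
            exact ⟨hd1, hd2⟩),
          Finset.sum_insert (by
            simp only [Finset.mem_singleton]
            exact hd3),
          Finset.sum_singleton]
        have e1 := hend (tv v) (f v) h1
        have e2 := hend (tv w) (f v) h2
        have e3 := hend (tv (f v)) (f v) h3
        omega
      have hge : 3 ≤ degAt K (f v) := by
        unfold degAt
        exact le_trans hsum3 (Finset.sum_le_sum_of_subset hsub)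
      rw [hdeg (f v)] at hge
      omega
    have hbij : Function.Bijective f := Finite.injective_iff_bijective.mp hinj
    refine ⟨Equiv.ofBijective f hbij, ?_, ?_⟩
    · simp only [Finset.mem_filter, Finset.mem_univ, true_and]
      intro i
      exact hinter i
    · have hcardK : K.card = n := by
        rw [Finset.card_eq_sum_card_fiberwise
          (f := fun t => (LID D).tvert t) (t := Finset.univ)
          (fun t _ => Finset.mem_univ _)]
        rw [Finset.sum_congr rfl (fun v _ => by rw [htv v, Finset.card_singleton])]
        simp
      apply Finset.eq_of_subset_of_card_le
      · intro t ht
        obtain ⟨i, rfl⟩ := mem_Fmap.mp ht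
        show toA i (f i) ∈ K
        rw [hkey i]
        exact htvK i
      · rw [hcardK]
        unfold Fmap
        rw [Finset.card_image_of_injective _ (Fmap_mapinj D (fun i => hinter i))]
        simp
  · -- values agree
    intro σ hσ
    simp only [Finset.mem_filter, Finset.mem_univ, true_and] at hσ
    rw [aK_Fmap D hσ, Finset.card_filter, ← Finset.prod_pow_eq_pow_sum]
    exact Finset.prod_congr rfl (fun i _ => IM_val D (hσ i))
end

section
/- Let G = (V,A) be a looped digraph and let 𝒦₂ be the set of acceptable objects for G in which every vertex has degree 0 or 2. Then Σ_K (−1)^{a(K)} = 0, where the sum is over all K ∈ 𝒦₂ containing at least one red arc. -/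
open Finset

variable {V : Type*} [Fintype V] [DecidableEq V]

namespace RedSumAux

variable {V : Type*} [Fintype V] [DecidableEq V]

/-- Good objects: acceptable, all degrees 0 or 2, containing a red arc. -/
abbrev Good (G : LoopedDigraph V) (K : Finset (TArc V)) : Prop :=
  G.IsAcceptable K ∧ (∀ v, degAt K v = 0 ∨ degAt K v = 2) ∧ (∃ t ∈ K, t.1 ∈ G.red)

theorem sum_replace {M : Type*} [AddCommMonoid M] {K : Finset (TArc V)} {a a' : TArc V}
    (ha : a ∈ K) (ha' : a' ∉ K) (f : TArc V → M) :
    (∑ t ∈ insert a' (K.erase a), f t) + f a = (∑ t ∈ K, f t) + f a' := by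
  rw [Finset.sum_insert (fun h => ha' (Finset.mem_of_mem_erase h))]
  rw [add_assoc, Finset.sum_erase_add _ _ ha, add_comm]

variable (G : LoopedDigraph V)

theorem tvert_red {e : V × V} (he : e ∈ G.red) (b : Bool) : G.tvert (e, b) = e.1 := by
  simp [LoopedDigraph.tvert, he]

theorem src_red {e : V × V} (he : e ∈ G.red) (b : Bool) :
    G.src (e, b) = if b then e.1 else e.2 := by
  cases b <;> simp [LoopedDigraph.src, he]

theorem red_ne {e : V × V} (he : e ∈ G.red) : e.1 ≠ e.2 := by
  intro h
  have he' : e = (e.1, e.1) := Prod.ext rfl h.symm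
  exact G.red_no_loop e.1 (he' ▸ he)

theorem thick_le_one {K : Finset (TArc V)} (hA : G.IsAcceptable K)
    (hd : ∀ v, degAt K v = 0 ∨ degAt K v = 2) (v : V) : G.thickAt K v ≤ 1 := by
  have := hA.half_thick v
  rcases hd v with h | h <;> omega

theorem unique_red {K : Finset (TArc V)} (hA : G.IsAcceptable K)
    (hd : ∀ v, degAt K v = 0 ∨ degAt K v = 2) {e : V × V} (he : e ∈ G.red)
    {b b' : Bool} (hb : (e, b) ∈ K) (hb' : (e, b') ∈ K) : b = b' := by
  by_contra hne
  have h2 : 1 < G.thickAt K e.1 := by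
    apply Finset.one_lt_card.2
    refine ⟨(e, b), ?_, (e, b'), ?_, by simp [hne]⟩ <;>
      simp [Finset.mem_filter, hb, hb', tvert_red G he]
  have := thick_le_one G hA hd e.1
  omega

open Classical in
noncomputable def fe (K : Finset (TArc V))
    (h : (K.filter fun t => t.1 ∈ G.red).Nonempty) : V × V :=
  (Fintype.equivFin (V × V)).symm
    (((K.filter fun t => t.1 ∈ G.red).image fun t => Fintype.equivFin (V × V) t.1).min'
      (h.image _))

open Classical in
noncomputable def fb (K : Finset (TArc V))
    (h : (K.filter fun t => t.1 ∈ G.red).Nonempty) : Bool :=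
  if (fe G K h, true) ∈ K then true else false

open Classical in
noncomputable def flipK (K : Finset (TArc V)) : Finset (TArc V) :=
  if h : (K.filter fun t => t.1 ∈ G.red).Nonempty then
    insert (fe G K h, !fb G K h) (K.erase (fe G K h, fb G K h))
  else K

theorem fe_red {K : Finset (TArc V)} (h : (K.filter fun t => t.1 ∈ G.red).Nonempty) :
    fe G K h ∈ G.red ∧ ∃ b, (fe G K h, b) ∈ K := by
  classical
  have hm := Finset.min'_mem _ (h.image fun t => Fintype.equivFin (V × V) t.1)
  rw [Finset.mem_image] at hm
  obtain ⟨t, ht, hte⟩ := hm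
  rw [Finset.mem_filter] at ht
  have hfe : fe G K h = t.1 := by
    rw [fe, ← hte, Equiv.symm_apply_apply]
  refine ⟨hfe ▸ ht.2, ⟨t.2, ?_⟩⟩
  rw [hfe]
  exact ht.1

theorem fb_spec {K : Finset (TArc V)} (hA : G.IsAcceptable K)
    (hd : ∀ v, degAt K v = 0 ∨ degAt K v = 2)
    (h : (K.filter fun t => t.1 ∈ G.red).Nonempty) :
    (fe G K h, fb G K h) ∈ K ∧ (fe G K h, !fb G K h) ∉ K := by
  classical
  obtain ⟨hred, b, hb⟩ := fe_red G h
  rw [fb]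
  by_cases ht : (fe G K h, true) ∈ K
  · rw [if_pos ht]
    refine ⟨ht, fun hc => ?_⟩
    have := unique_red G hA hd hred ht hc
    simp at this
  · rw [if_neg ht]
    refine ⟨?_, by simpa using ht⟩
    cases b with
    | true => exact absurd hb ht
    | false => exact hb

theorem flipK_eq {K : Finset (TArc V)} (h : (K.filter fun t => t.1 ∈ G.red).Nonempty) :
    flipK G K = insert (fe G K h, !fb G K h) (K.erase (fe G K h, fb G K h)) := by
  rw [flipK, dif_pos h]

theorem good_ne {K : Finset (TArc V)} (hG : Good G K) :
    (K.filter fun t => t.1 ∈ G.red).Nonempty := by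
  classical
  obtain ⟨t, ht, hr⟩ := hG.2.2
  exact ⟨t, Finset.mem_filter.2 ⟨ht, hr⟩⟩

theorem sum_replace_eq {M : Type*} [AddCancelCommMonoid M] {K : Finset (TArc V)}
    {a a' : TArc V} (ha : a ∈ K) (ha' : a' ∉ K) (f : TArc V → M) (hf : f a = f a') :
    ∑ t ∈ insert a' (K.erase a), f t = ∑ t ∈ K, f t := by
  have key := sum_replace ha ha' f
  rw [hf] at key
  exact add_right_cancel key

theorem degAt_flip {K : Finset (TArc V)} (hG : Good G K) (v : V) :
    degAt (flipK G K) v = degAt K v := by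
  classical
  have h := good_ne G hG
  obtain ⟨ha, ha'⟩ := fb_spec G hG.1 hG.2.1 h
  rw [flipK_eq G h]
  simp only [degAt]
  exact sum_replace_eq ha ha' _ rfl

theorem thickAt_flip {K : Finset (TArc V)} (hG : Good G K) (v : V) :
    G.thickAt (flipK G K) v = G.thickAt K v := by
  classical
  have h := good_ne G hG
  obtain ⟨ha, ha'⟩ := fb_spec G hG.1 hG.2.1 h
  have hred := (fe_red G h).1
  rw [flipK_eq G h]
  simp only [LoopedDigraph.thickAt, Finset.card_filter]
  refine sum_replace_eq ha ha' _ ?_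
  simp only [tvert_red G hred]

theorem good_flip {K : Finset (TArc V)} (hG : Good G K) : Good G (flipK G K) := by
  classical
  have h := good_ne G hG
  obtain ⟨ha, ha'⟩ := fb_spec G hG.1 hG.2.1 h
  have hred := (fe_red G h).1
  have hne := red_ne G hred
  refine ⟨⟨?_, ?_, ?_, ?_, ?_⟩, ?_, ?_⟩
  · intro t ht
    rw [flipK_eq G h, Finset.mem_insert] at ht
    rcases ht with ht | ht
    · rw [ht]; exact G.red_sub hred
    · exact hG.1.mem_arcs t (Finset.mem_of_mem_erase ht)
  · intro t ht hl
    rw [flipK_eq G h, Finset.mem_insert] at ht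
    rcases ht with ht | ht
    · rw [ht] at hl; exact absurd hl hne
    · exact hG.1.loop_thick t (Finset.mem_of_mem_erase ht) hl
  · intro v
    rw [degAt_flip G hG]
    rcases hG.2.1 v with hv | hv
    · exact Or.inl hv
    · exact Or.inr (Or.inl hv)
  · intro v
    rw [thickAt_flip G hG, degAt_flip G hG]
    exact hG.1.half_thick v
  · intro v hv
    rw [thickAt_flip G hG] at hv
    have := thick_le_one G hG.1 hG.2.1 v
    omega
  · intro v
    rw [degAt_flip G hG]
    exact hG.2.1 v
  · refine ⟨(fe G K h, !fb G K h), ?_, hred⟩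
    rw [flipK_eq G h]
    exact Finset.mem_insert_self _ _

theorem aK_flip {K : Finset (TArc V)} (hG : Good G K) :
    ((-1 : ℤ) ^ G.aK (flipK G K)) = -((-1 : ℤ) ^ G.aK K) := by
  classical
  have h := good_ne G hG
  obtain ⟨ha, ha'⟩ := fb_spec G hG.1 hG.2.1 h
  have hred := (fe_red G h).1
  have hne := red_ne G hred
  have hq : ∀ b : Bool,
      (if G.src (fe G K h, b) = G.tvert (fe G K h, b) then (1 : ℕ) else 0)
        = if b then 1 else 0 := by
    intro b
    rw [src_red G hred, tvert_red G hred]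
    cases b <;> simp [Ne.symm hne]
  have key := sum_replace ha ha'
    (fun t => if G.src t = G.tvert t then (1 : ℕ) else 0)
  simp only [hq] at key
  have hs : G.aK (flipK G K) + (if fb G K h then 1 else 0)
      = G.aK K + (if !fb G K h then 1 else 0) := by
    rw [LoopedDigraph.aK, LoopedDigraph.aK, flipK_eq G h,
      Finset.card_filter, Finset.card_filter]
    exact key
  cases hb : fb G K h
  · rw [hb] at hs
    simp only [Bool.not_false, if_true, if_false, add_zero, Bool.false_eq_true] at hs
    rw [hs, pow_succ]
    ring
  · rw [hb] at hs
    simp only [Bool.not_true, if_true, if_false, add_zero, Bool.false_eq_true] at hs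
    rw [← hs, pow_succ]
    ring

theorem redImage_flip {K : Finset (TArc V)} (hG : Good G K)
    (h : (K.filter fun t => t.1 ∈ G.red).Nonempty) :
    (((flipK G K).filter fun t => t.1 ∈ G.red).image fun t => Fintype.equivFin (V × V) t.1)
      = ((K.filter fun t => t.1 ∈ G.red).image fun t => Fintype.equivFin (V × V) t.1) := by
  classical
  obtain ⟨ha, ha'⟩ := fb_spec G hG.1 hG.2.1 h
  have hred := (fe_red G h).1
  apply Finset.ext
  intro i
  simp only [Finset.mem_image, Finset.mem_filter, flipK_eq G h, Finset.mem_insert,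
    Finset.mem_erase]
  constructor
  · rintro ⟨t, ⟨ht | ⟨_, ht⟩, hr⟩, hi⟩
    · exact ⟨(fe G K h, fb G K h), ⟨ha, hred⟩, by rw [← hi, ht]⟩
    · exact ⟨t, ⟨ht, hr⟩, hi⟩
  · rintro ⟨t, ⟨ht, hr⟩, hi⟩
    by_cases he : t = (fe G K h, fb G K h)
    · exact ⟨(fe G K h, !fb G K h), ⟨Or.inl rfl, hred⟩, by rw [← hi, he]⟩
    · exact ⟨t, ⟨Or.inr ⟨he, ht⟩, hr⟩, hi⟩

set_option maxHeartbeats 1000000 in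
theorem fe_flip {K : Finset (TArc V)} (hG : Good G K)
    (h : (K.filter fun t => t.1 ∈ G.red).Nonempty)
    (h' : ((flipK G K).filter fun t => t.1 ∈ G.red).Nonempty) :
    fe G (flipK G K) h' = fe G K h := by
  have him := redImage_flip G hG h
  rw [fe, fe]
  apply congrArg
  apply le_antisymm
  · refine Finset.min'_le _ _ ?_
    rw [him]
    exact Finset.min'_mem _ _
  · refine Finset.min'_le _ _ ?_
    rw [← him]
    exact Finset.min'_mem _ _

set_option maxHeartbeats 1000000 in
theorem fb_flip {K : Finset (TArc V)} (hG : Good G K)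
    (h : (K.filter fun t => t.1 ∈ G.red).Nonempty)
    (h' : ((flipK G K).filter fun t => t.1 ∈ G.red).Nonempty) :
    fb G (flipK G K) h' = !fb G K h := by
  classical
  obtain ⟨ha, ha'⟩ := fb_spec G hG.1 hG.2.1 h
  have hfe := fe_flip G hG h h'
  rw [fb, hfe]
  cases hb : fb G K h
  · rw [flipK_eq G h, hb]
    simp
  · rw [flipK_eq G h, hb]
    have : (fe G K h, true) ∉ insert (fe G K h, !true) (K.erase (fe G K h, true)) := by
      simp
    rw [if_neg this]
    rfl

theorem flip_flip {K : Finset (TArc V)} (hG : Good G K) : flipK G (flipK G K) = K := by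
  classical
  have h := good_ne G hG
  obtain ⟨ha, ha'⟩ := fb_spec G hG.1 hG.2.1 h
  have h' := good_ne G (good_flip G hG)
  rw [flipK_eq G h', fe_flip G hG h h', fb_flip G hG h h', Bool.not_not, flipK_eq G h,
    Finset.erase_insert (fun hc => ha' (Finset.mem_of_mem_erase hc)),
    Finset.insert_erase ha]

theorem flip_ne {K : Finset (TArc V)} (hG : Good G K) : flipK G K ≠ K := by
  classical
  have h := good_ne G hG
  obtain ⟨ha, ha'⟩ := fb_spec G hG.1 hG.2.1 h
  intro heq
  apply ha'
  have hm : (fe G K h, !fb G K h) ∈ flipK G K := by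
    rw [flipK_eq G h]
    exact Finset.mem_insert_self _ _
  rwa [heq] at hm

open Classical in
noncomputable def gK (K : Finset (TArc V)) : Finset (TArc V) :=
  if Good G K then flipK G K else K

end RedSumAux


open Classical in
/-- The contribution to `Σ_{K ∈ 𝒦₂} (−1)^{a(K)}` of the acceptable objects (with all
degrees `0` or `2`) containing at least one red arc vanishes. -/
theorem red_acceptable_sum_eq_zero {V : Type*} [Fintype V] [DecidableEq V]
    (G : LoopedDigraph V) :
    (∑ K : Finset (TArc V),
      if G.IsAcceptable K ∧ (∀ v, degAt K v = 0 ∨ degAt K v = 2) ∧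
          (∃ t ∈ K, t.1 ∈ G.red)
      then ((-1 : ℤ) ^ G.aK K) else 0) = 0 := by
  classical
  refine Finset.sum_ninvolution (RedSumAux.gK G) ?_ ?_ ?_ ?_
  · intro K
    by_cases hK : RedSumAux.Good G K
    · rw [RedSumAux.gK]
      rw [if_pos hK, if_pos hK, if_pos (RedSumAux.good_flip G hK), RedSumAux.aK_flip G hK]
      ring
    · rw [RedSumAux.gK]
      rw [if_neg hK, if_neg hK, if_neg hK]
      ring
  · intro K hK0
    have hK : RedSumAux.Good G K := by
      by_contra hc
      exact hK0 (if_neg hc)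
    simp only [RedSumAux.gK]
    rw [if_pos hK]
    exact RedSumAux.flip_ne G hK
  · intro K
    exact Finset.mem_univ _
  · intro K
    by_cases hK : RedSumAux.Good G K
    · rw [RedSumAux.gK, RedSumAux.gK]
      rw [if_pos hK, if_pos (RedSumAux.good_flip G hK), RedSumAux.flip_flip G hK]
    · rw [RedSumAux.gK, RedSumAux.gK]
      rw [if_neg hK, if_neg hK]
end
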